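/- The map Ψ₁ acts on its invariant curve Γ̄_κ as translation by 4κ on the tropical Jacobian ℝ/7κℤ: fix κ > 0 and let Γ̄_κ = {(x,y) : H(x,y) = κ}, which is the quadrilateral with vertices W₁ = (κ, 2κ), W₂ = (−κ, 0), W₃ = (0, −κ), W₄ = (κ, −κ) traversed counterclockwise, whose successive edges W₁W₂, W₂W₃, W₃W₄, W₄W₁ have lattice lengths 2κ, κ, κ, 3κ (total lattice length 7κ). Let η : Γ̄_κ → ℝ/7κℤ be the lattice-length parametrization determined by η(W₁) = 0, η(W₂) = 2κ, η(W₃) = 3κ, η(W₄) = 4κ, and affine on each edge (the point W_i + t(W_{i+1} − W_i), t ∈ [0,1], is sent to η(W_i) + t·ℓ_i where ℓ_i is the lattice length of the edge). Then for every P ∈ Γ̄_κ, η(Ψ₁(P)) ≡ η(P) + 4κ (mod 7κ). -/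

import Mathlib

/-- The ultradiscrete QRT map `Ψ₁(x,y) = (x̄, ȳ)` with `x̄ = -x + |y|` and
`ȳ = -y + max(x̄, 0)`. -/
noncomputable def psi1 (p : ℝ × ℝ) : ℝ × ℝ :=
  (-p.1 + |p.2|, -p.2 + max (-p.1 + |p.2|) 0)

/-- `H(x,y) = max(x, -y, -x+y, -x-y)`. -/
noncomputable def H (x y : ℝ) : ℝ :=
  max x (max (-y) (max (-x + y) (-x - y)))

/-- The Abel–Jacobi (lattice-length) parametrization `η : Γ̄_κ → ℝ/7κℤ` of the
quadrilateral `Γ̄_κ = {H = κ}` with vertices `W₁ = (κ,2κ)`, `W₂ = (−κ,0)`,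
`W₃ = (0,−κ)`, `W₄ = (κ,−κ)`: it sends `W₁, W₂, W₃, W₄` to `0, 2κ, 3κ, 4κ`
(the successive edges having lattice lengths `2κ, κ, κ, 3κ`) and is affine on
each edge.  On the edge `W₁W₂` (`y = x + κ`) it equals `κ − x`, on `W₂W₃`
(`y = −x − κ`) it equals `3κ + x`, on `W₃W₄` (`y = −κ`) it equals `3κ + x`,
and on `W₄W₁` (`x = κ`) it equals `5κ + y`. -/
noncomputable def eta (κ : ℝ) (p : ℝ × ℝ) : ℝ :=
  open Classical in
  if p.2 = p.1 + κ then κ - p.1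
  else if p.2 = -p.1 - κ then 3 * κ + p.1
  else if p.2 = -κ then 3 * κ + p.1
  else if p.1 = κ then 5 * κ + p.2
  else 0
/-!
`Γ̄_κ` is the union of the four edges `W₁W₂ : y = x + κ` (upper left), `W₂W₃ : y = -x - κ`
(lower left), `W₃W₄ : y = -κ` (bottom) and `W₄W₁ : x = κ` (right).  On each of them `Ψ₁` is
affine and lands again on `Γ̄_κ`: `W₁W₂` and `W₂W₃` go to `W₄W₁`, `W₃W₄` goes to `W₁W₂`, and
`W₄W₁`, cut at `(κ, 0)` and `(κ, κ)`, goes to `W₁W₂`, `W₂W₃`, `W₃W₄`.  Each piece preserves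
lattice length and orientation, so in the edge-wise formulas for `η` it is a shift, which is
`4κ` modulo the perimeter `7κ` in every case.
-/

open AddCommGroup Set

section Edges

variable {κ t : ℝ}

lemma H_mem_terms (x y : ℝ) :
    H x y = x ∨ H x y = -y ∨ H x y = -x + y ∨ H x y = -x - y := by
  simp only [H, max_def]
  split_ifs <;> simp

lemma mem_edges_of_H_eq {p : ℝ × ℝ} (hp : H p.1 p.2 = κ) :
    (∃ t ∈ Icc (-κ) κ, p = (t, t + κ)) ∨ (∃ t ∈ Icc (-κ) 0, p = (t, -t - κ)) ∨
      (∃ t ∈ Icc 0 κ, p = (t, -κ)) ∨ (∃ t ∈ Icc (-κ) (2 * κ), p = (κ, t)) := by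
  obtain ⟨x, y⟩ := p
  have hle : H x y ≤ κ := hp.le
  simp only [H, max_le_iff] at hle
  obtain ⟨h₁, h₂, h₃, h₄⟩ := hle
  rcases H_mem_terms x y with h | h | h | h <;> rw [hp] at h
  · exact Or.inr <| Or.inr <| Or.inr ⟨y, ⟨by linarith, by linarith⟩, by rw [h]⟩
  · exact Or.inr <| Or.inr <| Or.inl ⟨x, ⟨by linarith, h₁⟩, by rw [h, neg_neg]⟩
  · exact Or.inl ⟨x, ⟨by linarith, h₁⟩, by rw [h]; ring_nf⟩
  · exact Or.inr <| Or.inl ⟨x, ⟨by linarith, by linarith⟩, by rw [h]; ring_nf⟩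

lemma eta_upperLeft (t : ℝ) : eta κ (t, t + κ) = κ - t := if_pos rfl

lemma eta_lowerLeft (t : ℝ) : eta κ (t, -t - κ) = 3 * κ + t := by
  by_cases h : -t - κ = t + κ
  · rw [eta, if_pos h]; linarith
  · rw [eta, if_neg h, if_pos rfl]

lemma eta_bottom (hκ : 0 < κ) (ht : 0 ≤ t) : eta κ (t, -κ) = 3 * κ + t := by
  have h₁ : -κ ≠ t + κ := by intro h; linarith
  by_cases h₂ : -κ = -t - κ
  · rw [eta, if_neg h₁, if_pos h₂]
  · rw [eta, if_neg h₁, if_neg h₂, if_pos rfl]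

lemma eta_right (hκ : 0 < κ) (ht : -κ ≤ t) : eta κ (κ, t) ≡ 5 * κ + t [PMOD 7 * κ] := by
  have h₂ : t ≠ -κ - κ := by intro h; linarith
  by_cases h₁ : t = κ + κ
  · rw [eta, if_pos h₁]
    exact modEq_iff_eq_add_zsmul.2 ⟨1, by rw [h₁]; ring⟩
  by_cases h₃ : t = -κ
  · rw [eta, if_neg h₁, if_neg h₂, if_pos h₃]
    exact modEq_iff_eq_add_zsmul.2 ⟨0, by rw [h₃]; ring⟩
  · rw [eta, if_neg h₁, if_neg h₂, if_neg h₃, if_pos rfl]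

lemma psi1_upperLeft (hκ : 0 ≤ κ) (ht : -κ ≤ t) : psi1 (t, t + κ) = (κ, -t) := by
  rw [psi1, abs_of_nonneg (by linarith), max_eq_left (by linarith)]
  ext <;> dsimp only <;> ring

lemma psi1_lowerLeft (hκ : 0 ≤ κ) (ht : -κ ≤ t) : psi1 (t, -t - κ) = (κ, t + 2 * κ) := by
  rw [psi1, abs_of_nonpos (by linarith), max_eq_left (by linarith)]
  ext <;> dsimp only <;> ring

lemma psi1_bottom (hκ : 0 ≤ κ) (ht : t ≤ κ) : psi1 (t, -κ) = (κ - t, κ - t + κ) := by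
  rw [psi1, abs_of_nonpos (by linarith), max_eq_left (by linarith)]
  ext <;> dsimp only <;> ring

lemma psi1_right_of_nonpos (ht₁ : -κ ≤ t) (ht₂ : t ≤ 0) :
    psi1 (κ, t) = (-κ - t, -κ - t + κ) := by
  rw [psi1, abs_of_nonpos ht₂, max_eq_right (by linarith)]
  ext <;> dsimp only <;> ring

lemma psi1_right_of_nonneg_of_le (ht₁ : 0 ≤ t) (ht₂ : t ≤ κ) :
    psi1 (κ, t) = (t - κ, -(t - κ) - κ) := by
  rw [psi1, abs_of_nonneg ht₁, max_eq_right (by linarith)]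
  ext <;> dsimp only <;> ring

lemma psi1_right_of_le (hκ : 0 ≤ κ) (ht : κ ≤ t) : psi1 (κ, t) = (t - κ, -κ) := by
  rw [psi1, abs_of_nonneg (by linarith), max_eq_left (by linarith)]
  ext <;> dsimp only <;> ring

lemma eta_psi1_upperLeft (hκ : 0 < κ) (ht : t ∈ Icc (-κ) κ) :
    eta κ (t, t + κ) + 4 * κ ≡ eta κ (psi1 (t, t + κ)) [PMOD 7 * κ] := by
  rw [psi1_upperLeft hκ.le ht.1, eta_upperLeft]
  calc κ - t + 4 * κ = 5 * κ + -t := by ring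
    _ ≡ eta κ (κ, -t) [PMOD 7 * κ] := (eta_right hκ (by linarith [ht.2])).symm

lemma eta_psi1_lowerLeft (hκ : 0 < κ) (ht : t ∈ Icc (-κ) 0) :
    eta κ (t, -t - κ) + 4 * κ ≡ eta κ (psi1 (t, -t - κ)) [PMOD 7 * κ] := by
  rw [psi1_lowerLeft hκ.le ht.1, eta_lowerLeft]
  calc 3 * κ + t + 4 * κ = 5 * κ + (t + 2 * κ) := by ring
    _ ≡ eta κ (κ, t + 2 * κ) [PMOD 7 * κ] := (eta_right hκ (by linarith [ht.1])).symm

lemma eta_psi1_bottom (hκ : 0 < κ) (ht : t ∈ Icc 0 κ) :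
    eta κ (t, -κ) + 4 * κ ≡ eta κ (psi1 (t, -κ)) [PMOD 7 * κ] := by
  rw [psi1_bottom hκ.le ht.2, eta_bottom hκ ht.1, eta_upperLeft]
  calc 3 * κ + t + 4 * κ = κ - (κ - t) + 7 * κ := by ring
    _ ≡ κ - (κ - t) [PMOD 7 * κ] := add_modEq_left.2 self_modEq_zero

lemma eta_psi1_right (hκ : 0 < κ) (ht : t ∈ Icc (-κ) (2 * κ)) :
    eta κ (κ, t) + 4 * κ ≡ eta κ (psi1 (κ, t)) [PMOD 7 * κ] := by
  have himage : eta κ (psi1 (κ, t)) = 2 * κ + t := by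
    rcases le_total t 0 with h₀ | h₀
    · rw [psi1_right_of_nonpos ht.1 h₀, eta_upperLeft]; ring
    rcases le_total t κ with hκt | hκt
    · rw [psi1_right_of_nonneg_of_le h₀ hκt, eta_lowerLeft]; ring
    · rw [psi1_right_of_le hκ.le hκt, eta_bottom hκ (by linarith)]; ring
  calc eta κ (κ, t) + 4 * κ ≡ 5 * κ + t + 4 * κ [PMOD 7 * κ] := (eta_right hκ ht.1).add_right _
    _ = 2 * κ + t + 7 * κ := by ring
    _ ≡ 2 * κ + t [PMOD 7 * κ] := add_modEq_left.2 self_modEq_zero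
    _ = eta κ (psi1 (κ, t)) := himage.symm

end Edges

theorem psi1_translation_on_jacobian (κ : ℝ) (hκ : 0 < κ) (p : ℝ × ℝ)
    (hp : H p.1 p.2 = κ) :
    ∃ n : ℤ, eta κ (psi1 p) = eta κ p + 4 * κ + 7 * κ * n := by
  suffices h : eta κ p + 4 * κ ≡ eta κ (psi1 p) [PMOD 7 * κ] by
    obtain ⟨n, hn⟩ := modEq_iff_eq_add_zsmul.1 h
    exact ⟨n, by rw [hn, zsmul_eq_mul, mul_comm (n : ℝ)]⟩
  rcases mem_edges_of_H_eq hp with ⟨t, ht, rfl⟩ | ⟨t, ht, rfl⟩ | ⟨t, ht, rfl⟩ | ⟨t, ht, rfl⟩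
  · exact eta_psi1_upperLeft hκ ht
  · exact eta_psi1_lowerLeft hκ ht
  · exact eta_psi1_bottom hκ ht
  · exact eta_psi1_right hκ ht
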